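/- Let A be a finite abelian group. The subgroup Quad₀(A, ℝ/ℤ) = {q ∈ Quad(A, ℝ/ℤ) : o(a)·q(a) = 0 for all a ∈ A}, where o(a) denotes the order of a, is isomorphic to Hom(S²(A), ℝ/ℤ). -/

import Mathlib

variable {A B : Type*} [AddCommGroup A] [AddCommGroup B]

/-- The polarization of a map between abelian groups. -/
def polz (γ : A → B) (x y : A) : B := γ (x + y) - γ x - γ y

/-- A quadratic form between abelian groups: even, with bilinear polarization. -/
def IsQuadratic (γ : A → B) : Prop :=
  (∀ a, γ a = γ (-a)) ∧
  (∀ x x' y, polz γ (x + x') y = polz γ x y + polz γ x' y) ∧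
  (∀ x y y', polz γ x (y + y') = polz γ x y + polz γ x y')

lemma polz_add_fun (f g : A → B) (x y : A) :
    polz (f + g) x y = polz f x y + polz g x y := by
  simp only [polz, Pi.add_apply]; abel

lemma polz_neg_fun (f : A → B) (x y : A) :
    polz (-f) x y = - polz f x y := by
  simp only [polz, Pi.neg_apply]; abel

/-- The group of `ℝ/ℤ`-valued quadratic forms on `A`. -/
noncomputable def QuadGroup (A : Type*) [AddCommGroup A] : AddSubgroup (A → AddCircle (1 : ℝ)) where
  carrier := {γ | IsQuadratic γ}
  zero_mem' := ⟨fun _ => rfl, fun _ _ _ => by simp [polz], fun _ _ _ => by simp [polz]⟩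
  add_mem' := by
    rintro f g ⟨hf1, hf2, hf3⟩ ⟨hg1, hg2, hg3⟩
    refine ⟨fun a => by simp only [Pi.add_apply, hf1 a, hg1 a], fun x x' y => ?_,
      fun x y y' => ?_⟩
    · rw [polz_add_fun, polz_add_fun, polz_add_fun, hf2, hg2]; abel
    · rw [polz_add_fun, polz_add_fun, polz_add_fun, hf3, hg3]; abel
  neg_mem' := by
    rintro f ⟨hf1, hf2, hf3⟩
    refine ⟨fun a => by simp only [Pi.neg_apply, hf1 a], fun x x' y => ?_, fun x y y' => ?_⟩
    · rw [polz_neg_fun, polz_neg_fun, polz_neg_fun, hf2]; abel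
    · rw [polz_neg_fun, polz_neg_fun, polz_neg_fun, hf3]; abel

/-- The subgroup `Quad₀(A,ℝ/ℤ)` of quadratic forms with `o(a)·q(a) = 0` for all `a`. -/
noncomputable def quadGroup0 (A : Type*) [AddCommGroup A] :
    AddSubgroup (A → AddCircle (1 : ℝ)) where
  carrier := {γ | IsQuadratic γ ∧ ∀ a : A, addOrderOf a • γ a = 0}
  zero_mem' := ⟨(QuadGroup A).zero_mem, fun a => smul_zero _⟩
  add_mem' := by
    rintro f g ⟨hf, hf0⟩ ⟨hg, hg0⟩
    exact ⟨(QuadGroup A).add_mem hf hg,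
      fun a => by simp only [Pi.add_apply, smul_add, hf0 a, hg0 a, add_zero]⟩
  neg_mem' := by
    rintro f ⟨hf, hf0⟩
    exact ⟨(QuadGroup A).neg_mem hf,
      fun a => by simp only [Pi.neg_apply, smul_neg, hf0 a, neg_zero]⟩

open TensorProduct in
/-- The second symmetric power `S²(A) = (A ⊗ A)/⟨a⊗b - b⊗a⟩` of `A` as a ℤ-module. -/
abbrev symPower2 (A : Type*) [AddCommGroup A] :=
  (TensorProduct ℤ A A) ⧸
    (Submodule.span ℤ {x : TensorProduct ℤ A A | ∃ a b : A, x = a ⊗ₜ[ℤ] b - b ⊗ₜ[ℤ] a})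

/-! A finite abelian group is `A ≅ ⨁ ℤ/nᵢ`; let `eᵢ` be the generators and order the indices.
A symmetric biadditive `B` gives the form `x ↦ C(x, x)`, where `C` is the upper-triangular part
of `B`: `C(eᵢ, eⱼ) = B(eᵢ, eⱼ)` for `i ≤ j` and `0` otherwise. It lies in `Quad₀` because
`o(x)·C(x, x) = C(o(x)·x, x) = 0`, and its values at the `eᵢ` and its polarizations at the pairs
`(eᵢ, eⱼ)`, `i ≠ j`, are exactly the `B(eᵢ, eⱼ)`. These data determine a quadratic form. Conversely,
for `q ∈ Quad₀` the data `q(eᵢ)`, `polz q eᵢ eⱼ` are killed by `nᵢ` and by `nⱼ` (on the diagonal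
this is the condition `o(eᵢ)·q(eᵢ) = 0`), so they are the values of a symmetric biadditive `B`, which
is then sent to `q`. Symmetric biadditive maps are the homomorphisms out of `S²(A)`. -/

open DirectSum TensorProduct

section Quadratic

variable {X Y N : Type*} [AddCommGroup X] [AddCommGroup Y] [AddCommGroup N]

lemma AddMonoidHom.eq_of_eqOn_dense₂ {s : Set X} (hs : AddSubgroup.closure s = ⊤)
    {t : Set Y} (ht : AddSubgroup.closure t = ⊤) {B B' : X →+ Y →+ N}
    (h : ∀ x ∈ s, ∀ y ∈ t, B x y = B' x y) : B = B' :=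
  eq_of_eqOn_dense hs fun x hx => eq_of_eqOn_dense ht fun y hy => h x hx y hy

lemma polz_comm (γ : X → N) (x y : X) : polz γ x y = polz γ y x := by
  simp only [polz, add_comm x y]; abel

namespace IsQuadratic

variable {γ : X → N} (h : IsQuadratic γ)
include h

def polarization : X →+ X →+ N :=
  AddMonoidHom.mk' (fun x => AddMonoidHom.mk' (polz γ x) (h.2.2 x))
    fun x x' => AddMonoidHom.ext (h.2.1 x x')

lemma polarization_apply (x y : X) : h.polarization x y = polz γ x y := rfl

lemma map_zero : γ 0 = 0 := by
  have h00 : polz γ 0 0 = 0 := by simpa using h.2.1 0 0 0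
  simpa [polz] using h00

lemma polz_self (x : X) : polz γ x x = γ x + γ x := by
  have hneg : polz γ x (-x) = -polz γ x x := map_neg (h.polarization x) x
  rw [polz, add_neg_cancel, h.map_zero, ← h.1 x] at hneg
  rw [← neg_inj, ← hneg]; abel

lemma comp (f : Y →+ X) : IsQuadratic (γ ∘ f) := by
  refine ⟨fun a => by simp [h.1 (f a)], fun x x' y => ?_, fun x y y' => ?_⟩ <;>
    simp only [polz, Function.comp_apply, map_add] at * <;> [exact h.2.1 _ _ _; exact h.2.2 _ _ _]

lemma eq_zero_of_generators {ι : Type*} {e : ι → X}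
    (he : AddSubgroup.closure (Set.range e) = ⊤) (h₀ : ∀ i, γ (e i) = 0)
    (hpolz : ∀ i j, i ≠ j → polz γ (e i) (e j) = 0) : γ = 0 := by
  have hpol : h.polarization = 0 := by
    refine AddMonoidHom.eq_of_eqOn_dense₂ he he ?_
    rintro _ ⟨i, rfl⟩ _ ⟨j, rfl⟩
    rcases eq_or_ne i j with rfl | hij
    · simp [polarization_apply, h.polz_self, h₀]
    · exact hpolz i j hij
  have hadd (x y : X) : γ (x + y) = γ x + γ y := by
    have := DFunLike.congr_fun (DFunLike.congr_fun hpol x) y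
    rwa [polarization_apply, AddMonoidHom.zero_apply, AddMonoidHom.zero_apply, polz, sub_sub,
      sub_eq_zero] at this
  have hhom : AddMonoidHom.mk' γ hadd = 0 :=
    AddMonoidHom.eq_of_eqOn_dense he (by rintro _ ⟨i, rfl⟩; exact h₀ i)
  exact funext fun x => DFunLike.congr_fun hhom x

end IsQuadratic

lemma isQuadratic_diag (C : X →+ X →+ N) : IsQuadratic fun x => C x x := by
  refine ⟨fun a => by simp, fun x x' y => ?_, fun x y y' => ?_⟩ <;>
    simp only [polz, map_add, AddMonoidHom.add_apply] <;> abel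

lemma polz_diag (C : X →+ X →+ N) (x y : X) : polz (fun x => C x x) x y = C x y + C y x := by
  simp only [polz, map_add, AddMonoidHom.add_apply]; abel

lemma addOrderOf_nsmul_diag (C : X →+ X →+ N) (a : X) : addOrderOf a • C a a = 0 := by
  rw [← AddMonoidHom.nsmul_apply, ← map_nsmul, addOrderOf_nsmul_eq_zero, _root_.map_zero,
    AddMonoidHom.zero_apply]

def quadGroup0Congr (e : X ≃+ Y) : quadGroup0 X ≃+ quadGroup0 Y where
  toFun γ := ⟨γ.1 ∘ e.symm, γ.2.1.comp e.symm.toAddMonoidHom,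
    fun a => by simpa [AddEquiv.addOrderOf_eq] using γ.2.2 (e.symm a)⟩
  invFun γ := ⟨γ.1 ∘ e, γ.2.1.comp e.toAddMonoidHom,
    fun a => by simpa [AddEquiv.addOrderOf_eq] using γ.2.2 (e a)⟩
  left_inv γ := by ext; simp
  right_inv γ := by ext; simp
  map_add' _ _ := rfl

end Quadratic

section SymmetricBiadditive

variable {X Y N : Type*} [AddCommGroup X] [AddCommGroup Y] [AddCommGroup N]

def symBilGroup (X N : Type*) [AddCommGroup X] [AddCommGroup N] :
    AddSubgroup (X →+ X →+ N) where
  carrier := {B | ∀ x y, B x y = B y x}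
  zero_mem' _ _ := rfl
  add_mem' hB hB' x y := by simp only [AddMonoidHom.add_apply, hB x y, hB' x y]
  neg_mem' hB x y := by simp only [AddMonoidHom.neg_apply, hB x y]

def symBilGroupCongr (e : X ≃+ Y) : symBilGroup X N ≃+ symBilGroup Y N where
  toFun B := ⟨(B.1.comp e.symm.toAddMonoidHom).compl₂ e.symm.toAddMonoidHom,
    fun x y => B.2 (e.symm x) (e.symm y)⟩
  invFun B := ⟨(B.1.comp e.toAddMonoidHom).compl₂ e.toAddMonoidHom, fun x y => B.2 (e x) (e y)⟩
  left_inv B := by ext; simp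
  right_inv B := by ext; simp
  map_add' B B' := by ext; simp

lemma symPower2_hom_ext {f g : symPower2 X →+ N}
    (h : ∀ a b : X, f (Submodule.Quotient.mk (a ⊗ₜ b)) = g (Submodule.Quotient.mk (a ⊗ₜ b))) :
    f = g :=
  AddMonoidHom.toIntLinearMap_injective <| Submodule.linearMap_qext _ <| TensorProduct.ext' h

def symPower2Lift (B : symBilGroup X N) : symPower2 X →+ N :=
  (Submodule.liftQ _ (TensorProduct.liftAddHom B.1 fun r a b => by simp).toIntLinearMap <|
    Submodule.span_le.mpr <| by
      rintro _ ⟨a, b, rfl⟩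
      simp [TensorProduct.liftAddHom_tmul, B.2 a b]).toAddMonoidHom

@[simp]
lemma symPower2Lift_mk (B : symBilGroup X N) (a b : X) :
    symPower2Lift B (Submodule.Quotient.mk (a ⊗ₜ b)) = B.1 a b := by
  simp [symPower2Lift, TensorProduct.liftAddHom_tmul]

def symBilOfSymPower2 (f : symPower2 X →+ N) : symBilGroup X N :=
  ⟨((LinearMap.toAddMonoidHom' (σ₁₂ := RingHom.id ℤ)).comp
      (TensorProduct.mk ℤ X X).toAddMonoidHom).compr₂ (f.comp (Submodule.mkQ _).toAddMonoidHom),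
    fun a b => congrArg f <| (Submodule.Quotient.eq _).mpr <| Submodule.subset_span ⟨a, b, rfl⟩⟩

def symBilEquivHom : symBilGroup X N ≃+ (symPower2 X →+ N) where
  toFun := symPower2Lift
  invFun := symBilOfSymPower2
  left_inv B := by ext; simp [symBilOfSymPower2]
  right_inv f := symPower2_hom_ext fun a b => by simp [symBilOfSymPower2]
  map_add' B B' := symPower2_hom_ext fun a b => by simp

end SymmetricBiadditive

def zmodHomOfNsmul {M : Type*} [AddCommGroup M] {m : ℕ} (a : M) (ha : m • a = 0) :
    ZMod m →+ M :=
  ZMod.lift m ⟨zmultiplesHom M a, by simpa using ha⟩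

lemma zmodHomOfNsmul_one {M : Type*} [AddCommGroup M] {m : ℕ} (a : M) (ha : m • a = 0) :
    zmodHomOfNsmul a ha 1 = a := by
  rw [zmodHomOfNsmul, ← Int.cast_one, ZMod.lift_coe]
  simp

namespace ZModSum

section Generators

variable {ι : Type*} [DecidableEq ι] (n : ι → ℕ) {M N : Type*} [AddCommGroup M] [AddCommGroup N]

def gen (i : ι) : ⨁ i, ZMod (n i) := of (fun i => ZMod (n i)) i 1

lemma closure_range_gen : AddSubgroup.closure (Set.range (gen n)) = ⊤ := by
  rw [eq_top_iff]
  rintro x -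
  induction x using DirectSum.induction_on with
  | zero => exact zero_mem _
  | of i a =>
    rw [← ZMod.intCast_zmod_cast a, ← Int.smul_one_eq_cast, map_zsmul]
    exact zsmul_mem (AddSubgroup.subset_closure (Set.mem_range_self i)) _
  | add x y hx hy => exact add_mem hx hy

lemma nsmul_gen (i : ι) : n i • gen n i = 0 := by
  rw [gen, ← map_nsmul, nsmul_one, ZMod.natCast_self, _root_.map_zero]

def proj (i : ι) : (⨁ i, ZMod (n i)) →+ ⨁ i, ZMod (n i) :=
  (of _ i).comp (DFinsupp.evalAddMonoidHom i)

lemma proj_gen (i j : ι) : proj n i (gen n j) = if i = j then gen n j else 0 := by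
  change of (fun i => ZMod (n i)) i (gen n j i) = _
  rcases eq_or_ne i j with rfl | hij
  · simp [gen]
  · rw [if_neg hij, gen, DirectSum.of_eq_of_ne _ _ _ hij, _root_.map_zero]

def homOfGen (v : ι → M) (hv : ∀ i, n i • v i = 0) : (⨁ i, ZMod (n i)) →+ M :=
  toAddMonoid fun i => zmodHomOfNsmul (v i) (hv i)

@[simp]
lemma homOfGen_gen (v : ι → M) (hv : ∀ i, n i • v i = 0) (i : ι) :
    homOfGen n v hv (gen n i) = v i := by
  simp [homOfGen, gen, zmodHomOfNsmul_one]

def biadditiveOfGen (c : ι → ι → N) (hl : ∀ i j, n i • c i j = 0) (hr : ∀ i j, n j • c i j = 0) :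
    (⨁ i, ZMod (n i)) →+ (⨁ i, ZMod (n i)) →+ N :=
  homOfGen n (fun i => homOfGen n (c i) (hr i)) fun i =>
    AddMonoidHom.eq_of_eqOn_dense (closure_range_gen n) (by rintro _ ⟨j, rfl⟩; simp [hl])

lemma biadditiveOfGen_gen (c : ι → ι → N) (hl : ∀ i j, n i • c i j = 0)
    (hr : ∀ i j, n j • c i j = 0) (i j : ι) :
    biadditiveOfGen n c hl hr (gen n i) (gen n j) = c i j := by
  simp [biadditiveOfGen]

def genData (q : (⨁ i, ZMod (n i)) → N) (i j : ι) : N :=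
  if i = j then q (gen n i) else polz q (gen n i) (gen n j)

lemma genData_comm (q : (⨁ i, ZMod (n i)) → N) (i j : ι) : genData n q i j = genData n q j i := by
  rcases eq_or_ne i j with rfl | hij
  · rfl
  · rw [genData, genData, if_neg hij, if_neg hij.symm, polz_comm]

lemma nsmul_genData {q : (⨁ i, ZMod (n i)) → N} (hq : IsQuadratic q)
    (hord : ∀ a, addOrderOf a • q a = 0) (i j : ι) : n i • genData n q i j = 0 := by
  rcases eq_or_ne i j with rfl | hij
  · obtain ⟨t, ht⟩ := addOrderOf_dvd_of_nsmul_eq_zero (nsmul_gen n i)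
    rw [genData, if_pos rfl, ht, mul_nsmul, hord, smul_zero]
  · rw [genData, if_neg hij, ← hq.polarization_apply, ← AddMonoidHom.nsmul_apply, ← map_nsmul,
      nsmul_gen, _root_.map_zero, AddMonoidHom.zero_apply]

lemma eq_of_genData_eq {q q' : (⨁ i, ZMod (n i)) → AddCircle (1 : ℝ)} (hq : q ∈ quadGroup0 _)
    (hq' : q' ∈ quadGroup0 _) (h : genData n q = genData n q') : q = q' := by
  refine sub_eq_zero.mp <| ((quadGroup0 _).sub_mem hq hq').1.eq_zero_of_generators
    (closure_range_gen n) (fun i => ?_) (fun i j hij => ?_)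
  · simpa [genData, sub_eq_zero] using congrFun (congrFun h i) i
  · have hij' := congrFun (congrFun h i) j
    simp only [genData, if_neg hij, polz] at hij'
    simp only [polz, Pi.sub_apply, ← sub_eq_zero.mpr hij']
    abel

end Generators

section UpperTriangular

variable {ι : Type*} [Fintype ι] [LinearOrder ι] (n : ι → ℕ) {N : Type*} [AddCommGroup N]

def upperPart (B : (⨁ i, ZMod (n i)) →+ (⨁ i, ZMod (n i)) →+ N) :
    (⨁ i, ZMod (n i)) →+ (⨁ i, ZMod (n i)) →+ N :=
  ∑ p : ι × ι with p.1 ≤ p.2, (B.comp (proj n p.1)).compl₂ (proj n p.2)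

lemma upperPart_apply (B : (⨁ i, ZMod (n i)) →+ (⨁ i, ZMod (n i)) →+ N)
    (x y : ⨁ i, ZMod (n i)) :
    upperPart n B x y = ∑ p : ι × ι with p.1 ≤ p.2, B (proj n p.1 x) (proj n p.2 y) := by
  simp only [upperPart, AddMonoidHom.finsetSum_apply, AddMonoidHom.compl₂_apply,
    AddMonoidHom.comp_apply]

lemma upperPart_gen (B : (⨁ i, ZMod (n i)) →+ (⨁ i, ZMod (n i)) →+ N) (i j : ι) :
    upperPart n B (gen n i) (gen n j) = if i ≤ j then B (gen n i) (gen n j) else 0 := by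
  rw [upperPart_apply, Finset.sum_filter, Fintype.sum_eq_single (i, j)]
  · simp [proj_gen]
  · intro p hp
    simp only [proj_gen]
    split_ifs <;> simp_all [Prod.ext_iff]

lemma upperPart_add (B B' : (⨁ i, ZMod (n i)) →+ (⨁ i, ZMod (n i)) →+ N) :
    upperPart n (B + B') = upperPart n B + upperPart n B' := by
  ext
  simp [upperPart_apply, Finset.sum_add_distrib]

lemma genData_diag_upperPart {B : (⨁ i, ZMod (n i)) →+ (⨁ i, ZMod (n i)) →+ N}
    (hB : ∀ x y, B x y = B y x) (i j : ι) :
    genData n (fun x => upperPart n B x x) i j = B (gen n i) (gen n j) := by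
  rcases eq_or_ne i j with rfl | hij
  · simp [genData, upperPart_gen]
  · rw [genData, if_neg hij, polz_diag, upperPart_gen, upperPart_gen]
    rcases hij.lt_or_gt with h | h
    · simp [h.le, h.not_ge]
    · simp [h.le, h.not_ge, hB]

noncomputable def quadOfSymBil :
    symBilGroup (⨁ i, ZMod (n i)) (AddCircle (1 : ℝ)) →+ quadGroup0 (⨁ i, ZMod (n i)) :=
  AddMonoidHom.mk' (fun B => ⟨fun x => upperPart n B.1 x x,
      isQuadratic_diag _, addOrderOf_nsmul_diag _⟩)
    fun B B' => Subtype.ext <| funext fun x => by simp [upperPart_add]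

lemma genData_quadOfSymBil (B : symBilGroup (⨁ i, ZMod (n i)) (AddCircle (1 : ℝ))) (i j : ι) :
    genData n (quadOfSymBil n B).1 i j = B.1 (gen n i) (gen n j) :=
  genData_diag_upperPart n B.2 i j

lemma quadOfSymBil_injective : Function.Injective (quadOfSymBil n) := by
  intro B B' h
  refine Subtype.ext <| AddMonoidHom.eq_of_eqOn_dense₂ (closure_range_gen n) (closure_range_gen n) ?_
  rintro _ ⟨i, rfl⟩ _ ⟨j, rfl⟩
  rw [← genData_quadOfSymBil, ← genData_quadOfSymBil, h]

lemma quadOfSymBil_surjective : Function.Surjective (quadOfSymBil n) := by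
  rintro ⟨q, hq, hord⟩
  have hr (i j : ι) : n j • genData n q i j = 0 := by
    rw [genData_comm]; exact nsmul_genData n hq hord j i
  set B := biadditiveOfGen n (genData n q) (nsmul_genData n hq hord) hr
  have hB : B.flip = B :=
    AddMonoidHom.eq_of_eqOn_dense₂ (closure_range_gen n) (closure_range_gen n) <| by
      rintro _ ⟨i, rfl⟩ _ ⟨j, rfl⟩
      simp [B, biadditiveOfGen_gen, genData_comm n q i j]
  refine ⟨⟨B, fun x y => DFunLike.congr_fun (DFunLike.congr_fun hB y) x⟩, Subtype.ext ?_⟩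
  refine eq_of_genData_eq n (quadOfSymBil n _).2 ⟨hq, hord⟩ (funext₂ fun i j => ?_)
  rw [genData_quadOfSymBil, biadditiveOfGen_gen]

noncomputable def symBilEquivQuadGroup0 :
    symBilGroup (⨁ i, ZMod (n i)) (AddCircle (1 : ℝ)) ≃+ quadGroup0 (⨁ i, ZMod (n i)) :=
  AddEquiv.ofBijective (quadOfSymBil n) ⟨quadOfSymBil_injective n, quadOfSymBil_surjective n⟩

end UpperTriangular

end ZModSum

/-- For a finite abelian group `A`, `Quad₀(A, ℝ/ℤ) ≅ Hom(S²(A), ℝ/ℤ)`. -/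
theorem quadGroup0_iso_hom_symPower2 (A : Type*) [AddCommGroup A] [Finite A] :
    Nonempty (quadGroup0 A ≃+ (symPower2 A →+ AddCircle (1 : ℝ))) := by
  obtain ⟨ι, _, n, -, ⟨e⟩⟩ := AddCommGroup.equiv_directSum_zmod_of_finite' A
  let : LinearOrder ι := LinearOrder.lift' _ (Fintype.equivFin ι).injective
  exact ⟨(quadGroup0Congr e).trans <| (ZModSum.symBilEquivQuadGroup0 n).symm.trans <|
    (symBilGroupCongr e.symm).trans symBilEquivHom⟩
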